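/- The fixed point α₊ of ζ with α₊ > 1 satisfies |ζ'(α₊)| > 1, hence α₊ is a repelling fixed point of the iteration s ↦ ζ(s). -/

import Mathlib

/-!
On `(1, ∞)` the function `ζ(s) = ∑ n⁻ˢ` is convex, being a sum of the convex functions
`s ↦ exp (-s log n)`; termwise this gives the tangent-line inequality
`ζ(2) ≥ ζ(α) + ζ'(α) (2 - α)`. With `ζ(α) = α` and `ζ(2) = π² / 6` it reads
`(2 - α) |ζ'(α)| ≥ α - π² / 6`, which forces `|ζ'(α)| > 1` once `2 α > 2 + π² / 6 ≈ 3.645`.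
That lower bound on `α` holds because `ζ` is decreasing and `ζ(31/17) > 31/17`, as the partial sum
up to `n = 6` together with the tail bound `∑_{n ≥ N} n⁻ˢ ≥ N¹⁻ˢ / (s - 1)` shows.
-/

open Real Filter Topology

lemma one_add_mul_log_le_rpow {x : ℝ} (hx : 0 < x) (a : ℝ) : 1 + a * log x ≤ x ^ a := by
  rw [rpow_def_of_pos hx]
  linarith [add_one_le_exp (log x * a)]

lemma one_div_rpow_sub_one_div_rpow_le {x : ℝ} (hx : 0 < x) (s t : ℝ) :
    1 / x ^ s - 1 / x ^ t ≤ (t - s) * (log x / x ^ s) := by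
  have hsplit : 1 / x ^ t = 1 / x ^ s * x ^ (s - t) := by
    rw [rpow_sub hx]; field_simp
  have hexp := one_add_mul_log_le_rpow hx (s - t)
  rw [hsplit]
  calc 1 / x ^ s - 1 / x ^ s * x ^ (s - t)
      ≤ 1 / x ^ s - 1 / x ^ s * (1 + (s - t) * log x) := by gcongr
    _ = (t - s) * (log x / x ^ s) := by ring

lemma rpow_add_mul_rpow_sub_one_le_rpow_add_one {x p : ℝ} (hx : 0 < x) (hp : p ≤ 0) :
    x ^ p + p * x ^ (p - 1) ≤ (x + 1) ^ p := by
  have hy : 0 < 1 + 1 / x := by positivity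
  have hlog : log (1 + 1 / x) ≤ 1 / x := by linarith [log_le_sub_one_of_pos hy]
  have hfactor : (x + 1) ^ p = x ^ p * (1 + 1 / x) ^ p := by
    rw [← mul_rpow hx.le hy.le]; congr 1; field_simp
  rw [hfactor, rpow_sub_one hx.ne']
  calc x ^ p + p * (x ^ p / x) = x ^ p * (1 + p * (1 / x)) := by ring
    _ ≤ x ^ p * (1 + p * log (1 + 1 / x)) := by
        gcongr x ^ p * (1 + ?_); exact mul_le_mul_of_nonpos_left hlog hp
    _ ≤ x ^ p * (1 + 1 / x) ^ p := by gcongr; exact one_add_mul_log_le_rpow hy p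

lemma le_one_div_rpow_of_pow_mul_pow_le_one {x q r : ℝ} {a b : ℕ} (hx : 0 < x) (hq : 0 ≤ q)
    (hb : b ≠ 0) (hr : b * r = a) (h : q ^ b * x ^ a ≤ 1) : q ≤ 1 / x ^ r := by
  have hpow : (1 / x ^ r) ^ b = 1 / x ^ a := by
    rw [div_pow, one_pow, ← rpow_mul_natCast hx.le, mul_comm, hr, rpow_natCast]
  refine (pow_le_pow_iff_left₀ hq (by positivity) hb).mp ?_
  rw [hpow, le_div_iff₀ (by positivity)]
  exact h

lemma rpow_one_sub_div_le_tsum_one_div_nat_add_rpow {s : ℝ} (hs : 1 < s) {N : ℕ} (hN : 0 < N) :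
    (N : ℝ) ^ (1 - s) / (s - 1) ≤ ∑' k : ℕ, 1 / ((k + N : ℕ) : ℝ) ^ s := by
  set g : ℕ → ℝ := fun k => ((k + N : ℕ) : ℝ) ^ (1 - s)
  have hstep (k : ℕ) : g k - g (k + 1) ≤ (s - 1) * (1 / ((k + N : ℕ) : ℝ) ^ s) := by
    have hx : (0 : ℝ) < (k + N : ℕ) := by positivity
    have := rpow_add_mul_rpow_sub_one_le_rpow_add_one hx (by linarith : 1 - s ≤ 0)
    simp only [g, show k + 1 + N = (k + N) + 1 by ring, Nat.cast_add_one]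
    rw [show 1 - s - 1 = -s by ring, rpow_neg hx.le] at this
    rw [one_div]
    linarith
  have hsum : Summable (fun k : ℕ => 1 / ((k + N : ℕ) : ℝ) ^ s) :=
    (summable_nat_add_iff N).mpr (Real.summable_one_div_nat_rpow.mpr hs)
  have hg : Tendsto g atTop (𝓝 0) := by
    have := (tendsto_rpow_neg_atTop (by linarith : 0 < s - 1)).comp
      (tendsto_natCast_atTop_atTop.comp (tendsto_add_atTop_nat N))
    simpa [g, Function.comp_def] using this
  have hpartial (M : ℕ) : g 0 - g M ≤ (s - 1) * ∑' k : ℕ, 1 / ((k + N : ℕ) : ℝ) ^ s := by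
    rw [← Finset.sum_range_sub']
    calc ∑ k ∈ Finset.range M, (g k - g (k + 1))
        ≤ ∑ k ∈ Finset.range M, (s - 1) * (1 / ((k + N : ℕ) : ℝ) ^ s) :=
          Finset.sum_le_sum fun k _ => hstep k
      _ ≤ (s - 1) * ∑' k : ℕ, 1 / ((k + N : ℕ) : ℝ) ^ s := by
          rw [← Finset.mul_sum]
          gcongr
          exact hsum.sum_le_tsum _ fun k _ => by positivity
  rw [div_le_iff₀' (by linarith)]
  simpa [g] using le_of_tendsto' (tendsto_const_nhds.sub hg) hpartial

lemma riemannZeta_ofReal_eq_tsum {s : ℝ} (hs : 1 < s) :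
    riemannZeta s = ↑(∑' n : ℕ, 1 / (n : ℝ) ^ s) := by
  rw [zeta_eq_tsum_one_div_nat_cpow (by simpa using hs), Complex.ofReal_tsum]
  congr 1 with n
  simp [Complex.ofReal_cpow (Nat.cast_nonneg n)]

lemma LSeries.term_logMul_one_ofReal (s : ℝ) (n : ℕ) :
    LSeries.term (LSeries.logMul 1) s n = ↑(log n / (n : ℝ) ^ s) := by
  rcases eq_or_ne n 0 with rfl | hn
  · simp
  · simp [LSeries.term_of_ne_zero hn, LSeries.logMul, Complex.ofReal_cpow (Nat.cast_nonneg n),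
      Complex.natCast_log]

lemma summable_log_div_nat_rpow {s : ℝ} (hs : 1 < s) :
    Summable (fun n : ℕ => log n / (n : ℝ) ^ s) := by
  have habs : LSeries.abscissaOfAbsConv 1 < (s : ℂ).re := by
    rw [LSeries.abscissaOfAbsConv_one]; exact_mod_cast hs
  exact Complex.summable_ofReal.mp <|
    (LSeriesSummable_logMul_of_lt_re habs).congr (LSeries.term_logMul_one_ofReal s)

lemma deriv_riemannZeta_ofReal_eq_tsum {s : ℝ} (hs : 1 < s) :
    deriv riemannZeta s = -↑(∑' n : ℕ, log n / (n : ℝ) ^ s) := by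
  have hre : 1 < (s : ℂ).re := by simpa using hs
  have habs : LSeries.abscissaOfAbsConv 1 < (s : ℂ).re := by
    rw [LSeries.abscissaOfAbsConv_one]; exact_mod_cast hre
  have hζ : riemannZeta =ᶠ[𝓝 (s : ℂ)] LSeries 1 :=
    eventually_of_mem ((isOpen_lt continuous_const Complex.continuous_re).mem_nhds hre)
      fun z hz => (LSeries_one_eq_riemannZeta hz).symm
  rw [hζ.deriv_eq, LSeries_deriv habs, LSeries, Complex.ofReal_tsum]
  simp only [LSeries.term_logMul_one_ofReal]

lemma norm_deriv_riemannZeta_ofReal_eq_tsum {s : ℝ} (hs : 1 < s) :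
    ‖deriv riemannZeta s‖ = ∑' n : ℕ, log n / (n : ℝ) ^ s := by
  rw [deriv_riemannZeta_ofReal_eq_tsum hs, norm_neg, Complex.norm_real, norm_of_nonneg]
  exact tsum_nonneg fun n => div_nonneg (log_natCast_nonneg n) (by positivity)

lemma tsum_one_div_nat_rpow_sub_le {s t : ℝ} (hs : 1 < s) (ht : 1 < t) :
    ∑' n : ℕ, 1 / (n : ℝ) ^ s - ∑' n : ℕ, 1 / (n : ℝ) ^ t
      ≤ (t - s) * ∑' n : ℕ, log n / (n : ℝ) ^ s := by
  rw [← (Real.summable_one_div_nat_rpow.mpr hs).tsum_sub (Real.summable_one_div_nat_rpow.mpr ht),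
    ← tsum_mul_left]
  refine ((Real.summable_one_div_nat_rpow.mpr hs).sub
    (Real.summable_one_div_nat_rpow.mpr ht)).tsum_le_tsum (fun n => ?_)
    ((summable_log_div_nat_rpow hs).mul_left _)
  rcases Nat.eq_zero_or_pos n with rfl | hn
  · simp [zero_rpow (by linarith : s ≠ 0), zero_rpow (by linarith : t ≠ 0)]
  · exact one_div_rpow_sub_one_div_rpow_le (by positivity) s t

lemma tsum_one_div_nat_rpow_le_of_le {s t : ℝ} (hs : 1 < s) (hst : s ≤ t) :
    ∑' n : ℕ, 1 / (n : ℝ) ^ t ≤ ∑' n : ℕ, 1 / (n : ℝ) ^ s := by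
  refine (Real.summable_one_div_nat_rpow.mpr (hs.trans_le hst)).tsum_le_tsum (fun n => ?_)
    (Real.summable_one_div_nat_rpow.mpr hs)
  rcases Nat.eq_zero_or_pos n with rfl | hn
  · simp [zero_rpow (by linarith : s ≠ 0), zero_rpow (by linarith : t ≠ 0)]
  · have hn1 : (1 : ℝ) ≤ n := by exact_mod_cast hn
    exact one_div_le_one_div_of_le (by positivity) (rpow_le_rpow_of_exponent_le hn1 hst)

lemma lt_tsum_one_div_nat_rpow_thirtyone_div_seventeen :
    (31 / 17 : ℝ) < ∑' n : ℕ, 1 / (n : ℝ) ^ (31 / 17 : ℝ) := by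
  have hsum := Real.summable_one_div_nat_rpow.mpr (by norm_num : (1 : ℝ) < 31 / 17)
  have htail := rpow_one_sub_div_le_tsum_one_div_nat_add_rpow (s := 31 / 17) (by norm_num)
    (N := 7) (by norm_num)
  have h7 : (0.2013 : ℝ) ≤ (7 : ℝ) ^ (1 - 31 / 17 : ℝ) := by
    rw [show (1 - 31 / 17 : ℝ) = -(14 / 17) by norm_num, rpow_neg (by norm_num), ← one_div]
    exact le_one_div_rpow_of_pow_mul_pow_le_one (a := 14) (b := 17) (by norm_num) (by norm_num)
      (by norm_num) (by norm_num) (by norm_num)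
  have hterm {x q : ℝ} (hx : 0 < x) (hq : 0 ≤ q) (h : q ^ 17 * x ^ 31 ≤ 1) :
      q ≤ 1 / x ^ (31 / 17 : ℝ) :=
    le_one_div_rpow_of_pow_mul_pow_le_one hx hq (by norm_num) (by norm_num) h
  have h2 := hterm (x := 2) (q := 0.2825) (by norm_num) (by norm_num) (by norm_num)
  have h3 := hterm (x := 3) (q := 0.1348) (by norm_num) (by norm_num) (by norm_num)
  have h4 := hterm (x := 4) (q := 0.0798) (by norm_num) (by norm_num) (by norm_num)
  have h5 := hterm (x := 5) (q := 0.0531) (by norm_num) (by norm_num) (by norm_num)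
  have h6 := hterm (x := 6) (q := 0.0381) (by norm_num) (by norm_num) (by norm_num)
  rw [← hsum.sum_add_tsum_nat_add 7]
  norm_num [Finset.sum_range_succ] at h2 h3 h4 h5 h6 h7 htail ⊢
  linarith

lemma thirtyone_div_seventeen_lt_of_tsum_one_div_nat_rpow_eq_self {α : ℝ} (hα : 1 < α)
    (hfix : ∑' n : ℕ, 1 / (n : ℝ) ^ α = α) : 31 / 17 < α := by
  by_contra! hle
  have hmono := tsum_one_div_nat_rpow_le_of_le hα hle
  linarith [lt_tsum_one_div_nat_rpow_thirtyone_div_seventeen]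

theorem zeta_fixed_point_repelling :
    ∀ α : ℝ, 1 < α → riemannZeta (α : ℂ) = (α : ℂ) →
      1 < ‖deriv riemannZeta (α : ℂ)‖ := by
  intro α hα hfix
  have hζα : ∑' n : ℕ, 1 / (n : ℝ) ^ α = α := by
    exact_mod_cast (riemannZeta_ofReal_eq_tsum hα).symm.trans hfix
  have hζ2 : ∑' n : ℕ, 1 / (n : ℝ) ^ (2 : ℝ) = π ^ 2 / 6 := by
    simpa only [rpow_two] using hasSum_zeta_two.tsum_eq
  have hα_gt := thirtyone_div_seventeen_lt_of_tsum_one_div_nat_rpow_eq_self hα hζα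
  have htangent := tsum_one_div_nat_rpow_sub_le hα one_lt_two
  rw [hζα, hζ2, ← norm_deriv_riemannZeta_ofReal_eq_tsum hα] at htangent
  nlinarith [norm_nonneg (deriv riemannZeta (α : ℂ)), pi_lt_d4, pi_pos]
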